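/- arXiv:2211.14980 — 2 statements merged into one kernel-verified Lean document; each statement's English description precedes it below -/
import Mathlib

section
/- Let λ ≥ 0, let P be a feature-consistent partition of Fin N, and let F be a proper subset of the set of blocks of P with K = |F|. Let S = Fin N minus the union of the blocks in F (S is nonempty since F is proper). Then R(P) ≥ (1/N)·∑_{B∈F} SSE(B) + λ·K + inf over integers C ≥ 1 of ( (1/N)·ConskMeans(C, S) + λ·C ). (k-Means Equivalent Points Lower Bound: strengthening the k-Means lower bound by additionally requiring that equivalent points, which can never be separated by a tree, be assigned to the same cluster.) -/
/-!
The blocks of `P` outside `F` form a feature-consistent partition of `S` into `C = |P \ F| ≥ 1`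
blocks. Labelling each point of `S` by its block and taking block means as centres is an admissible
solution of the constrained `C`-means problem on `S`, whose cost is `∑_{B ∈ P \ F} SSE(B)`.
Hence the infimum over `C` is at most the contribution of `P \ F` to `R(P)`, and the contribution
of `F` is the remaining part of `R(P)`.
-/

open Finset

/-- Sum of squared errors of targets `y` on a block `B`, with prediction the mean of `y` on `B`. -/
noncomputable def sse {N : ℕ} (y : Fin N → ℝ) (B : Finset (Fin N)) : ℝ :=
  ∑ i ∈ B, (y i - (∑ j ∈ B, y j) / (B.card : ℝ)) ^ 2

/-- `P` is a partition of the set `S`: pairwise disjoint nonempty blocks whose union is `S`. -/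
def IsPartitionOn {N : ℕ} (S : Finset (Fin N)) (P : Finset (Finset (Fin N))) : Prop :=
  (∀ B ∈ P, B.Nonempty) ∧
  (∀ B ∈ P, ∀ B' ∈ P, B ≠ B' → Disjoint B B') ∧
  P.biUnion id = S

/-- Regularized objective of a partition (tree): MSE plus `lam` per leaf. -/
noncomputable def Robj {N : ℕ} (y : Fin N → ℝ) (lam : ℝ) (P : Finset (Finset (Fin N))) : ℝ :=
  (1 / (N : ℝ)) * ∑ B ∈ P, sse y B + lam * (P.card : ℝ)

/-- A partition is feature-consistent if equivalent points (identical feature vectors)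
always lie in the same block. -/
def FeatureConsistent {N M : ℕ} (x : Fin N → Fin M → Bool)
    (P : Finset (Finset (Fin N))) : Prop :=
  ∀ i j : Fin N, x i = x j → ∀ B ∈ P, i ∈ B → j ∈ B

/-- Constrained 1D k-means objective: as `kMeansObj`, but points with identical feature
vectors must be assigned to the same cluster. -/
noncomputable def consKMeans {N M : ℕ} (x : Fin N → Fin M → Bool) (y : Fin N → ℝ)
    (C : ℕ) (S : Finset (Fin N)) : ℝ :=
  ⨅ (A : {A : {i // i ∈ S} → Fin C // ∀ i j, x i.1 = x j.1 → A i = A j})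
    (z : Fin C → ℝ), ∑ i ∈ S.attach, (y i.1 - z (A.1 i)) ^ 2

noncomputable def blockMean {N : ℕ} (y : Fin N → ℝ) (B : Finset (Fin N)) : ℝ :=
  (∑ j ∈ B, y j) / (B.card : ℝ)

theorem sse_eq_sum_sq_sub_blockMean {N : ℕ} (y : Fin N → ℝ) (B : Finset (Fin N)) :
    sse y B = ∑ i ∈ B, (y i - blockMean y B) ^ 2 :=
  rfl

namespace IsPartitionOn

variable {N : ℕ} {S : Finset (Fin N)} {P : Finset (Finset (Fin N))}

theorem mem_iff (hP : IsPartitionOn S P) {i : Fin N} : i ∈ S ↔ ∃ B ∈ P, i ∈ B := by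
  rw [← hP.2.2]
  simp only [mem_biUnion, id]

theorem eq_of_mem (hP : IsPartitionOn S P) {B B' : Finset (Fin N)} (hB : B ∈ P) (hB' : B' ∈ P)
    {i : Fin N} (hi : i ∈ B) (hi' : i ∈ B') : B = B' := by
  by_contra hne
  exact disjoint_left.mp (hP.2.1 B hB B' hB' hne) hi hi'

theorem sum_sum_eq (hP : IsPartitionOn S P) (f : Fin N → ℝ) :
    ∑ B ∈ P, ∑ i ∈ B, f i = ∑ i ∈ S, f i := by
  rw [← hP.2.2]
  exact (sum_biUnion fun B hB B' hB' hne => hP.2.1 B hB B' hB' hne).symm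

theorem sdiff (hP : IsPartitionOn S P) {F : Finset (Finset (Fin N))} (hF : F ⊆ P) :
    IsPartitionOn (S \ F.biUnion id) (P \ F) := by
  refine ⟨fun B hB => hP.1 B (mem_sdiff.1 hB).1,
    fun B hB B' hB' => hP.2.1 B (mem_sdiff.1 hB).1 B' (mem_sdiff.1 hB').1, ?_⟩
  ext i
  simp only [mem_biUnion, mem_sdiff, id]
  constructor
  · rintro ⟨B, ⟨hBP, hBF⟩, hiB⟩
    refine ⟨hP.mem_iff.2 ⟨B, hBP, hiB⟩, ?_⟩
    rintro ⟨B', hB'F, hiB'⟩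
    exact hBF (hP.eq_of_mem hBP (hF hB'F) hiB hiB' ▸ hB'F)
  · rintro ⟨hiS, hiF⟩
    obtain ⟨B, hBP, hiB⟩ := hP.mem_iff.1 hiS
    exact ⟨B, ⟨hBP, fun hBF => hiF ⟨B, hBF, hiB⟩⟩, hiB⟩

end IsPartitionOn

theorem FeatureConsistent.subset {N M : ℕ} {x : Fin N → Fin M → Bool}
    {P Q : Finset (Finset (Fin N))} (hP : FeatureConsistent x P) (hQ : Q ⊆ P) :
    FeatureConsistent x Q :=
  fun i j hij B hB => hP i j hij B (hQ hB)

section consKMeans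

variable {N M : ℕ} (x : Fin N → Fin M → Bool) (y : Fin N → ℝ)

theorem consKMeans_nonneg (C : ℕ) (S : Finset (Fin N)) : 0 ≤ consKMeans x y C S :=
  Real.iInf_nonneg fun _ => Real.iInf_nonneg fun _ => sum_nonneg fun _ _ => sq_nonneg _

theorem consKMeans_le_of_labeling {C : ℕ} {S : Finset (Fin N)} {α : Type*} (e : α ≃ Fin C)
    (A : {i // i ∈ S} → α) (hA : ∀ i j, x i.1 = x j.1 → A i = A j) (z : α → ℝ) :
    consKMeans x y C S ≤ ∑ i ∈ S.attach, (y i.1 - z (A i)) ^ 2 := by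
  have hcost_nonneg : ∀ (A' : {i // i ∈ S} → Fin C) (z' : Fin C → ℝ),
      0 ≤ ∑ i ∈ S.attach, (y i.1 - z' (A' i)) ^ 2 :=
    fun _ _ => sum_nonneg fun _ _ => sq_nonneg _
  refine ciInf_le_of_le ⟨0, ?_⟩ ⟨e ∘ A, fun i j h => congrArg e (hA i j h)⟩
    (ciInf_le_of_le ⟨0, ?_⟩ (z ∘ e.symm) ?_)
  · rintro r ⟨A', rfl⟩
    exact Real.iInf_nonneg (hcost_nonneg A'.1)
  · rintro r ⟨z', rfl⟩
    exact hcost_nonneg _ z'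
  · simp only [Function.comp_apply, Equiv.symm_apply_apply, le_refl]

theorem consKMeans_card_le_sum_sse {S : Finset (Fin N)} {Q : Finset (Finset (Fin N))}
    (hQ : IsPartitionOn S Q) (hQx : FeatureConsistent x Q) :
    consKMeans x y Q.card S ≤ ∑ B ∈ Q, sse y B := by
  choose! blk hblkQ hmem_blk using fun i (hi : i ∈ S) => hQ.mem_iff.1 hi
  have hblk_eq : ∀ B ∈ Q, ∀ i ∈ B, blk i = B := fun B hB i hi =>
    have hiS : i ∈ S := hQ.mem_iff.2 ⟨B, hB, hi⟩
    hQ.eq_of_mem (hblkQ i hiS) hB (hmem_blk i hiS) hi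
  have hconsistent : ∀ i j : {i // i ∈ S}, x i.1 = x j.1 →
      (⟨blk i, hblkQ i i.2⟩ : {B // B ∈ Q}) = ⟨blk j, hblkQ j j.2⟩ := fun i j hij =>
    Subtype.ext (hblk_eq _ (hblkQ i i.2) j (hQx i j hij _ (hblkQ i i.2) (hmem_blk i i.2))).symm
  calc consKMeans x y Q.card S
      ≤ ∑ i ∈ S.attach, (y i.1 - blockMean y (blk i)) ^ 2 :=
        consKMeans_le_of_labeling x y Q.equivFin _ hconsistent fun B => blockMean y B.1
    _ = ∑ i ∈ S, (y i - blockMean y (blk i)) ^ 2 :=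
        sum_attach S fun i => (y i - blockMean y (blk i)) ^ 2
    _ = ∑ B ∈ Q, ∑ i ∈ B, (y i - blockMean y (blk i)) ^ 2 := (hQ.sum_sum_eq _).symm
    _ = ∑ B ∈ Q, sse y B := sum_congr rfl fun B hB => by
        rw [sse_eq_sum_sq_sub_blockMean]
        exact sum_congr rfl fun i hi => by rw [hblk_eq B hB i hi]

end consKMeans

theorem kmeans_equivalent_points_lower_bound_general
    {N M : ℕ} (x : Fin N → Fin M → Bool) (y : Fin N → ℝ)
    (lam : ℝ) (hlam : 0 ≤ lam)
    (P : Finset (Finset (Fin N))) (hP : IsPartitionOn Finset.univ P)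
    (hPx : FeatureConsistent x P)
    (F : Finset (Finset (Fin N))) (hF : F ⊂ P) :
    (1 / (N : ℝ)) * ∑ B ∈ F, sse y B + lam * (F.card : ℝ)
      + ⨅ C : {C : ℕ // 1 ≤ C},
          ((1 / (N : ℝ)) * consKMeans x y C.1 (Finset.univ \ F.biUnion id) + lam * (C.1 : ℝ))
      ≤ Robj y lam P := by
  obtain ⟨B, hBP, hBF⟩ := exists_of_ssubset hF
  have hC : 1 ≤ (P \ F).card := card_pos.2 ⟨B, mem_sdiff.2 ⟨hBP, hBF⟩⟩
  have hinf := ciInf_le (f := fun C : {C : ℕ // 1 ≤ C} =>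
      (1 / (N : ℝ)) * consKMeans x y C.1 (univ \ F.biUnion id) + lam * (C.1 : ℝ))
    ⟨0, by
      rintro r ⟨C, rfl⟩
      have := consKMeans_nonneg x y C.1 (univ \ F.biUnion id)
      positivity⟩
    ⟨_, hC⟩
  have hcons := mul_le_mul_of_nonneg_left
    (consKMeans_card_le_sum_sse x y (hP.sdiff hF.subset) (hPx.subset sdiff_subset))
    (by positivity : (0 : ℝ) ≤ 1 / N)
  have hsum : ∑ B ∈ P, sse y B = ∑ B ∈ F, sse y B + ∑ B ∈ P \ F, sse y B := by
    rw [← sum_sdiff hF.subset, add_comm]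
  have hcard : (P.card : ℝ) = F.card + (P \ F).card := by
    rw [← card_sdiff_add_card_eq_card hF.subset, Nat.cast_add, add_comm]
  rw [Robj, hsum, hcard]
  dsimp only at hinf
  linarith

/-- **k-Means Equivalent Points Lower Bound.** For `λ ≥ 0`, a feature-consistent
partition `P` of `Fin N` and a proper subset `F` of its blocks with `K = |F|`, letting
`S = Fin N \ ⋃ F`,
`R(P) ≥ (1/N)·∑_{B∈F} SSE(B) + λ·K + inf_{C ≥ 1} ((1/N)·ConskMeans(C,S) + λ·C)`. -/
theorem kmeans_equivalent_points_lower_bound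
    {N M : ℕ} (hN : 1 ≤ N) (x : Fin N → Fin M → Bool) (y : Fin N → ℝ)
    (lam : ℝ) (hlam : 0 ≤ lam)
    (P : Finset (Finset (Fin N))) (hP : IsPartitionOn Finset.univ P)
    (hPx : FeatureConsistent x P)
    (F : Finset (Finset (Fin N))) (hF : F ⊂ P) :
    (1 / (N : ℝ)) * ∑ B ∈ F, sse y B + lam * (F.card : ℝ)
      + ⨅ C : {C : ℕ // 1 ≤ C},
          ((1 / (N : ℝ)) * consKMeans x y C.1 (Finset.univ \ F.biUnion id) + lam * (C.1 : ℝ))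
      ≤ Robj y lam P :=
  kmeans_equivalent_points_lower_bound_general x y lam hlam P hP hPx F hF
end

section
/- Let m ≥ 1, let v : Fin m → ℝ be points and w : Fin m → ℝ weights with w j > 0 for all j, let W(C) denote the weighted k-means objective with C clusters, and let λ ≥ 0. If for some integer C ≥ 1 we have W(C) − W(C+1) ≤ λ, then for every integer C' ≥ C, W(C) + λ·C ≤ W(C') + λ·C'. (Early-stopping correctness: once the loss improvement from adding one cluster drops below the regularization λ, the regularized objective W(C) + λ·C cannot be improved by any larger number of clusters; this justifies the termination rule of the lower-bound computation in Algorithm 1.) -/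
/-!
The weighted one-dimensional k-means cost `W` is convex in the number of clusters from one cluster
on, so the improvements `W C - W (C + 1)` do not increase; once one of them is at most `λ`, every
later one is, and `W C' + λ C'` can only grow for `C' ≥ C`.

For convexity, sort the points. Sending every point to its nearest center (ties broken towards the
lower center) is monotone, so optimal clusters are intervals of consecutive points. The optimal
one-cluster cost of intervals satisfies the concave quadrangle inequality
`c a b + c a' b' ≤ c a b' + c a' b` for `a ≤ a' ≤ b ≤ b'`: compare both sides with the centers
`mean [a, b')` and `mean [a', b)`. A partition into `k + 1` intervals and one into `k + 3` intervals
cross somewhere, and exchanging their tails there gives two partitions into `k + 2` intervals whose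
total cost is, by the quadrangle inequality, no larger.
-/

open Finset

/-- Weighted k-means objective for points `v` with (positive) weights `w` and `C` clusters. -/
noncomputable def wKMeans {ι : Type*} [Fintype ι] (v w : ι → ℝ) (C : ℕ) : ℝ :=
  ⨅ (A : ι → Fin C) (z : Fin C → ℝ), ∑ j, w j * (v j - z (A j)) ^ 2

/-- Boundaries `0 = b 0 ≤ b 1 ≤ ⋯ ≤ b k = n` of a partition of `[0, n)` into the `k` intervals
`[b i, b (i + 1))`; the values of `b` beyond `k` play no role. -/
def IntervalPartition (n k : ℕ) : Type := {b : ℕ → ℕ // Monotone b ∧ b 0 = 0 ∧ b k = n}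

namespace IntervalPartition

instance instNonempty (n k : ℕ) [NeZero k] : Nonempty (IntervalPartition n k) :=
  ⟨⟨fun i => min n (n * i), fun _ _ h => min_le_min_left _ (Nat.mul_le_mul_left _ h),
    by simp, min_eq_left (Nat.le_mul_of_pos_right _ (Nat.pos_of_ne_zero (NeZero.ne k)))⟩⟩

variable (c : ℕ → ℕ → ℝ)

def cost (k : ℕ) (b : ℕ → ℕ) : ℝ := ∑ i ∈ range k, c (b i) (b (i + 1))

noncomputable def optCost (n k : ℕ) : ℝ := ⨅ b : IntervalPartition n k, cost c k b.1

def QuadrangleInequality : Prop :=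
  ∀ ⦃a a' b b' : ℕ⦄, a ≤ a' → a' ≤ b → b ≤ b' → c a b + c a' b' ≤ c a b' + c a' b

lemma cost_split (b : ℕ → ℕ) (i r : ℕ) :
    cost c (i + 1 + r) b = ∑ j ∈ range i, c (b j) (b (j + 1)) + c (b i) (b (i + 1))
      + ∑ j ∈ range r, c (b (i + 1 + j)) (b (i + 1 + j + 1)) := by
  rw [cost, sum_range_add, sum_range_succ]

lemma optCost_le (hc : ∀ a b, 0 ≤ c a b) {n k : ℕ} (b : IntervalPartition n k) :
    optCost c n k ≤ cost c k b.1 :=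
  ciInf_le ⟨0, by rintro _ ⟨b, rfl⟩; exact sum_nonneg fun i _ => hc _ _⟩ b

lemma exists_crossing {b d : ℕ → ℕ} (h0 : b 0 ≤ d 1) :
    ∀ k, d (k + 2) ≤ b (k + 1) → ∃ i ≤ k, b i ≤ d (i + 1) ∧ d (i + 2) ≤ b (i + 1)
  | 0, h => ⟨0, le_rfl, h0, h⟩
  | k + 1, h => by
    by_cases hk : d (k + 2) ≤ b (k + 1)
    · obtain ⟨i, hi, hcross⟩ := exists_crossing h0 k hk
      exact ⟨i, by omega, hcross⟩
    · exact ⟨k + 1, le_rfl, (not_le.mp hk).le, h⟩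

def splice (b d : ℕ → ℕ) (i : ℕ) : ℕ → ℕ := fun j => if j ≤ i then b j else d j

lemma monotone_splice {b d : ℕ → ℕ} (hb : Monotone b) (hd : Monotone d) {i : ℕ}
    (h : b i ≤ d (i + 1)) : Monotone (splice b d i) := by
  intro x y hxy
  simp only [splice]
  split_ifs with hx hy hy
  · exact hb hxy
  · exact (hb hx).trans (h.trans (hd (by omega)))
  · omega
  · exact hd hxy

lemma cost_splice (b d : ℕ → ℕ) (i r : ℕ) :
    cost c (i + 1 + r) (splice b d i) = ∑ j ∈ range i, c (b j) (b (j + 1)) + c (b i) (d (i + 1))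
      + ∑ j ∈ range r, c (d (i + 1 + j)) (d (i + 1 + j + 1)) := by
  rw [cost_split]
  congr 1
  · congr 1
    · refine sum_congr rfl fun j hj => ?_
      simp only [mem_range] at hj
      simp only [splice, if_pos hj.le, if_pos (show j + 1 ≤ i by omega)]
    · simp [splice]
  · refine sum_congr rfl fun j _ => ?_
    simp only [splice, if_neg (show ¬ i + 1 + j ≤ i by omega),
      if_neg (show ¬ i + 1 + j + 1 ≤ i by omega)]

/-- Exchanging the tails of two partitions at a crossing turns `k + 1` and `k + 3` intervals into
twice `k + 2` intervals; by the quadrangle inequality this does not increase the total cost. -/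
lemma exists_cost_add_cost_le (hc : QuadrangleInequality c) {n k : ℕ}
    (b : IntervalPartition n (k + 1)) (d : IntervalPartition n (k + 3)) :
    ∃ e f : IntervalPartition n (k + 2),
      cost c (k + 2) e.1 + cost c (k + 2) f.1 ≤ cost c (k + 1) b.1 + cost c (k + 3) d.1 := by
  obtain ⟨b, hb, hb0, hbk⟩ := b
  obtain ⟨d, hd, hd0, hdk⟩ := d
  have hdn : d (k + 2) ≤ n := hdk ▸ hd (by omega)
  obtain ⟨i, hik, hbd, hdb⟩ :=
    exists_crossing (by rw [hb0]; omega) k (show d (k + 2) ≤ b (k + 1) by omega)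
  obtain ⟨r, rfl⟩ := Nat.exists_eq_add_of_le hik
  have hd₁ : d (i + 1) ≤ d (i + 1 + 1) := hd (by omega)
  let e := splice b (fun j => d (j + 1)) i
  let f := splice d (fun j => b (j - 1)) (i + 1)
  have he : Monotone e := monotone_splice hb (fun _ _ h => hd (by omega)) (hbd.trans hd₁)
  have hf : Monotone f := monotone_splice hd (fun _ _ h => hb (by omega)) (hd₁.trans hdb)
  refine ⟨⟨e, he, by simp [e, splice, hb0], by simp [e, splice, hdk]; omega⟩,
    ⟨f, hf, by simp [f, splice, hd0], by simp [f, splice, hbk]⟩, ?_⟩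
  have hcost_e : cost c (i + 1 + (r + 1)) e = _ := cost_splice c b (fun j => d (j + 1)) i (r + 1)
  have hcost_f : cost c (i + 1 + 1 + r) f = _ := cost_splice c d (fun j => b (j - 1)) (i + 1) r
  have hcost_b := cost_split c b i r
  have hcost_d := cost_split c d (i + 1) (r + 1)
  have htail_d : ∑ j ∈ range (r + 1), c (d (i + 1 + j + 1)) (d (i + 1 + j + 1 + 1))
      = ∑ j ∈ range (r + 1), c (d (i + 1 + 1 + j)) (d (i + 1 + 1 + j + 1)) :=
    sum_congr rfl fun j _ => by congr 2 <;> omega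
  have htail_b : ∑ j ∈ range r, c (b (i + 1 + 1 + j - 1)) (b (i + 1 + 1 + j + 1 - 1))
      = ∑ j ∈ range r, c (b (i + 1 + j)) (b (i + 1 + j + 1)) :=
    sum_congr rfl fun j _ => by congr 2 <;> omega
  rw [htail_d] at hcost_e
  rw [htail_b] at hcost_f
  simp only [show i + 1 + (r + 1) = i + r + 2 by omega, show i + 1 + 1 + r = i + r + 2 by omega,
    show i + 1 + r = i + r + 1 by omega, show i + 1 + 1 + (r + 1) = i + r + 3 by omega,
    Nat.add_sub_cancel] at hcost_e hcost_f hcost_b hcost_d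
  show cost c (i + r + 2) e + cost c (i + r + 2) f ≤ cost c (i + r + 1) b + cost c (i + r + 3) d
  linarith [hc hbd hd₁ hdb]

lemma optCost_convex (hc0 : ∀ a b, 0 ≤ c a b) (hc : QuadrangleInequality c) (n k : ℕ) :
    2 * optCost c n (k + 2) ≤ optCost c n (k + 1) + optCost c n (k + 3) :=
  le_ciInf_add_ciInf fun b d => by
    obtain ⟨e, f, hef⟩ := exists_cost_add_cost_le c hc b d
    linarith [optCost_le c hc0 e, optCost_le c hc0 f]

end IntervalPartition

section ClusterCost

variable {ι : Type*} (v w : ι → ℝ)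

def centerCost (S : Finset ι) (z : ℝ) : ℝ := ∑ j ∈ S, w j * (v j - z) ^ 2

/-- The optimal one-center cost of `S`, attained at the weighted mean. -/
noncomputable def clusterCost (S : Finset ι) : ℝ := centerCost v w S (S.centerMass w v)

variable {v w}

lemma centerCost_union [DecidableEq ι] {S T : Finset ι} (h : Disjoint S T) (z : ℝ) :
    centerCost v w (S ∪ T) z = centerCost v w S z + centerCost v w T z :=
  sum_union h

lemma centerCost_nonneg (hw : ∀ j, 0 < w j) (S : Finset ι) (z : ℝ) : 0 ≤ centerCost v w S z :=
  sum_nonneg fun j _ => mul_nonneg (hw j).le (sq_nonneg _)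

lemma clusterCost_nonneg (hw : ∀ j, 0 < w j) (S : Finset ι) : 0 ≤ clusterCost v w S :=
  centerCost_nonneg hw S _

lemma centerCost_eq_clusterCost_add (hw : ∀ j, 0 < w j) (S : Finset ι) (z : ℝ) :
    centerCost v w S z =
      clusterCost v w S + (∑ j ∈ S, w j) * (z - S.centerMass w v) ^ 2 := by
  rcases S.eq_empty_or_nonempty with rfl | hS
  · simp [clusterCost, centerCost]
  have hW : ∑ j ∈ S, w j ≠ 0 := (sum_pos (fun j _ => hw j) hS).ne'
  have hmean : (∑ j ∈ S, w j) * S.centerMass w v = ∑ j ∈ S, w j * v j := by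
    simp only [centerMass, smul_eq_mul, ← mul_assoc, mul_inv_cancel₀ hW, one_mul]
  have hexpand : ∀ z, centerCost v w S z =
      ∑ j ∈ S, w j * v j ^ 2 - 2 * z * ∑ j ∈ S, w j * v j + z ^ 2 * ∑ j ∈ S, w j := fun z => by
    simp only [centerCost, mul_sum, ← sum_sub_distrib, ← sum_add_distrib]
    exact sum_congr rfl fun j _ => by ring
  rw [clusterCost, hexpand, hexpand]
  linear_combination (2 * z - 2 * S.centerMass w v) * hmean

lemma clusterCost_le_centerCost (hw : ∀ j, 0 < w j) (S : Finset ι) (z : ℝ) :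
    clusterCost v w S ≤ centerCost v w S z := by
  rw [centerCost_eq_clusterCost_add hw]
  exact le_add_of_nonneg_right
    (mul_nonneg (sum_nonneg fun j _ => (hw j).le) (sq_nonneg _))

lemma clusterCost_add_le_union [DecidableEq ι] (hw : ∀ j, 0 < w j) {S T : Finset ι}
    (h : Disjoint S T) : clusterCost v w S + clusterCost v w T ≤ clusterCost v w (S ∪ T) := by
  conv_rhs => rw [clusterCost, centerCost_union h]
  exact add_le_add (clusterCost_le_centerCost hw _ _) (clusterCost_le_centerCost hw _ _)

lemma clusterCost_quadrangle [DecidableEq ι] (hw : ∀ j, 0 < w j) {X Y Z : Finset ι}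
    (hXY : Disjoint X Y) (hYZ : Disjoint Y Z) (hXZ : Disjoint X Z)
    (hvXY : ∀ x ∈ X, ∀ y ∈ Y, v x ≤ v y) (hvYZ : ∀ y ∈ Y, ∀ z ∈ Z, v y ≤ v z) :
    clusterCost v w (X ∪ Y) + clusterCost v w (Y ∪ Z)
      ≤ clusterCost v w (X ∪ Y ∪ Z) + clusterCost v w Y := by
  rcases Y.eq_empty_or_nonempty with rfl | hY
  · have h0 : clusterCost v w ∅ = 0 := by simp [clusterCost, centerCost]
    simpa only [union_empty, empty_union, h0, add_zero] using clusterCost_add_le_union hw hXZ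
  have hWY : 0 < ∑ j ∈ Y, w j := sum_pos (fun j _ => hw j) hY
  set p := (X ∪ Y ∪ Z).centerMass w v
  set q := Y.centerMass w v
  have hXYZ : Disjoint (X ∪ Y) Z := disjoint_union_left.mpr ⟨hXZ, hYZ⟩
  have hp : clusterCost v w (X ∪ Y ∪ Z)
      = centerCost v w X p + centerCost v w Y p + centerCost v w Z p := by
    rw [clusterCost, centerCost_union hXYZ, centerCost_union hXY]
  have hYq : clusterCost v w Y = centerCost v w Y q := rfl
  -- Move whichever of `X`, `Z` lies on the far side of `q` from `p` over to the center `q`.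
  rcases le_total p q with hpq | hqp
  · have hqZ : ∀ z ∈ Z, q ≤ v z := fun z hz =>
      Convex.centerMass_mem (convex_Iic (v z)) (fun j _ => (hw j).le) hWY
        fun y hy => hvYZ y hy z hz
    have hZ : centerCost v w Z q ≤ centerCost v w Z p :=
      sum_le_sum fun z hz => mul_le_mul_of_nonneg_left
        (by nlinarith [hqZ z hz]) (hw z).le
    have h1 := clusterCost_le_centerCost (v := v) hw (X ∪ Y) p
    have h2 := clusterCost_le_centerCost (v := v) hw (Y ∪ Z) q
    rw [centerCost_union hXY] at h1
    rw [centerCost_union hYZ] at h2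
    linarith
  · have hqX : ∀ x ∈ X, v x ≤ q := fun x hx =>
      Convex.centerMass_mem (convex_Ici (v x)) (fun j _ => (hw j).le) hWY
        fun y hy => hvXY x hx y hy
    have hX : centerCost v w X q ≤ centerCost v w X p :=
      sum_le_sum fun x hx => mul_le_mul_of_nonneg_left
        (by nlinarith [hqX x hx]) (hw x).le
    have h1 := clusterCost_le_centerCost (v := v) hw (X ∪ Y) q
    have h2 := clusterCost_le_centerCost (v := v) hw (Y ∪ Z) p
    rw [centerCost_union hXY] at h1
    rw [centerCost_union hYZ] at h2
    linarith

end ClusterCost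

section KMeans

variable {ι : Type*} [Fintype ι] {v w : ι → ℝ} {k : ℕ}

lemma wKMeans_le (hw : ∀ j, 0 < w j) (A : ι → Fin k) (z : Fin k → ℝ) :
    wKMeans v w k ≤ ∑ j, w j * (v j - z (A j)) ^ 2 := by
  have hnonneg (A : ι → Fin k) (z : Fin k → ℝ) : 0 ≤ ∑ j, w j * (v j - z (A j)) ^ 2 :=
    sum_nonneg fun j _ => mul_nonneg (hw j).le (sq_nonneg _)
  refine (ciInf_le ⟨0, ?_⟩ A).trans (ciInf_le ⟨0, ?_⟩ z)
  · rintro _ ⟨A, rfl⟩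
    exact Real.iInf_nonneg (hnonneg A)
  · rintro _ ⟨z, rfl⟩
    exact hnonneg A z

lemma le_wKMeans [NeZero k] {c : ℝ}
    (h : ∀ (A : ι → Fin k) (z : Fin k → ℝ), c ≤ ∑ j, w j * (v j - z (A j)) ^ 2) :
    c ≤ wKMeans v w k :=
  le_ciInf fun A => le_ciInf (h A)

lemma wKMeans_comp_equiv {κ : Type*} [Fintype κ] (e : κ ≃ ι) (v w : ι → ℝ) (k : ℕ) :
    wKMeans (v ∘ e) (w ∘ e) k = wKMeans v w k := by
  refine Equiv.iInf_congr (e.arrowCongr (Equiv.refl _)) fun A => iInf_congr fun z => ?_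
  rw [← Equiv.sum_comp e]
  simp

lemma sum_centerCost_fiber (A : ι → Fin k) (z : Fin k → ℝ) :
    ∑ i, centerCost v w {j | A j = i} (z i) = ∑ j, w j * (v j - z (A j)) ^ 2 := by
  rw [← sum_fiberwise univ A]
  exact sum_congr rfl fun i _ => sum_congr rfl fun j hj => by rw [(mem_filter.mp hj).2]

lemma wKMeans_le_sum_clusterCost (hw : ∀ j, 0 < w j) (A : ι → Fin k) :
    wKMeans v w k ≤ ∑ i, clusterCost v w {j | A j = i} := by
  simpa only [clusterCost, sum_centerCost_fiber] using
    wKMeans_le hw A fun i => ({j | A j = i} : Finset ι).centerMass w v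

lemma sum_clusterCost_fiber_le (hw : ∀ j, 0 < w j) (A : ι → Fin k) (z : Fin k → ℝ) :
    ∑ i, clusterCost v w {j | A j = i} ≤ ∑ j, w j * (v j - z (A j)) ^ 2 :=
  sum_centerCost_fiber (v := v) (w := w) A z ▸
    sum_le_sum fun _ _ => clusterCost_le_centerCost hw _ _

end KMeans

/-- Ties are broken towards the smallest index: an arbitrary choice among equidistant centers need
not be monotone. -/
lemma exists_monotone_nearest {α : Type*} [Preorder α] {v : α → ℝ} (hv : Monotone v) {k : ℕ}
    [NeZero k] {z : Fin k → ℝ} (hz : Monotone z) :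
    ∃ A : α → Fin k, Monotone A ∧ ∀ j i, (v j - z (A j)) ^ 2 ≤ (v j - z i) ^ 2 := by
  classical
  let nearest (x : α) : Finset (Fin k) := {i | ∀ i', (v x - z i) ^ 2 ≤ (v x - z i') ^ 2}
  have hne : ∀ x, (nearest x).Nonempty := fun x => by
    obtain ⟨i, -, hi⟩ := exists_min_image univ (fun i => (v x - z i) ^ 2) univ_nonempty
    exact ⟨i, mem_filter.mpr ⟨mem_univ _, fun i' => hi i' (mem_univ _)⟩⟩
  have hnear : ∀ x i, (v x - z ((nearest x).min' (hne x))) ^ 2 ≤ (v x - z i) ^ 2 :=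
    fun x => (mem_filter.mp (min'_mem _ (hne x))).2
  refine ⟨fun x => (nearest x).min' (hne x), fun x y hxy => ?_, hnear⟩
  by_contra! hlt
  obtain ⟨i, hfar⟩ : ∃ i, (v x - z i) ^ 2 < (v x - z ((nearest y).min' (hne y))) ^ 2 := by
    by_contra! h
    exact (min'_le _ _ (mem_filter.mpr ⟨mem_univ _, h⟩)).not_gt hlt
  have := hnear x i
  have := hnear y ((nearest x).min' (hne x))
  have := hz hlt.le
  have := hv hxy
  nlinarith

section Intervals

variable {m : ℕ}

def finIco (m a b : ℕ) : Finset (Fin m) := {j | a ≤ (j : ℕ) ∧ (j : ℕ) < b}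

lemma finIco_union {a b c : ℕ} (hab : a ≤ b) (hbc : b ≤ c) :
    finIco m a b ∪ finIco m b c = finIco m a c := by
  ext j
  simp only [finIco, mem_union, mem_filter, mem_univ, true_and]
  omega

lemma disjoint_finIco {a b c d : ℕ} (hbc : b ≤ c) : Disjoint (finIco m a b) (finIco m c d) := by
  simp only [finIco, disjoint_left, mem_filter, mem_univ, true_and]
  omega

noncomputable def intervalCost (v w : Fin m → ℝ) (a b : ℕ) : ℝ := clusterCost v w (finIco m a b)

variable {v w : Fin m → ℝ}

lemma intervalCost_nonneg (hw : ∀ j, 0 < w j) (a b : ℕ) : 0 ≤ intervalCost v w a b :=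
  clusterCost_nonneg hw _

lemma intervalCost_quadrangle (hw : ∀ j, 0 < w j) (hv : Monotone v) :
    IntervalPartition.QuadrangleInequality (intervalCost v w) := by
  intro a a' b b' h₁ h₂ h₃
  have hv' : ∀ {c d e f : ℕ}, d ≤ e → ∀ x ∈ finIco m c d, ∀ y ∈ finIco m e f, v x ≤ v y :=
    fun hde x hx y hy => hv <| by
      simp only [finIco, mem_filter, mem_univ, true_and] at hx hy
      omega
  have := clusterCost_quadrangle (v := v) (X := finIco m a a') (Y := finIco m a' b)
    (Z := finIco m b b') hw (disjoint_finIco le_rfl) (disjoint_finIco le_rfl)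
    (disjoint_finIco h₂) (hv' le_rfl) (hv' le_rfl)
  simpa only [intervalCost, finIco_union h₁ h₂, finIco_union h₂ h₃,
    finIco_union (h₁.trans h₂) h₃] using this

end Intervals

namespace IntervalPartition

variable {m k : ℕ}

def IsIntervalAssignment (b : IntervalPartition m k) (A : Fin m → Fin k) : Prop :=
  ∀ i : Fin k, finIco m (b.1 i) (b.1 (i + 1)) = ({j | A j = i} : Finset (Fin m))

lemma exists_le_lt_succ (b : ℕ → ℕ) {x : ℕ} (h₀ : b 0 ≤ x) :
    ∀ k, x < b k → ∃ i < k, b i ≤ x ∧ x < b (i + 1)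
  | 0, h => absurd h (not_lt.mpr h₀)
  | k + 1, h => by
    by_cases hk : x < b k
    · obtain ⟨i, hi, hmem⟩ := exists_le_lt_succ b h₀ k hk
      exact ⟨i, by omega, hmem⟩
    · exact ⟨k, by omega, not_lt.mp hk, h⟩

lemma exists_assignment (b : IntervalPartition m k) :
    ∃ A : Fin m → Fin k, IsIntervalAssignment b A := by
  obtain ⟨b, hb, hb0, hbk⟩ := b
  have hex : ∀ j : Fin m, ∃ i : Fin k, b i ≤ j ∧ (j : ℕ) < b (i + 1) := fun j => by
    obtain ⟨i, hi, hmem⟩ := exists_le_lt_succ b (by omega) k (by rw [hbk]; exact j.isLt)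
    exact ⟨⟨i, hi⟩, hmem⟩
  choose A hA using hex
  refine ⟨A, fun i => ?_⟩
  ext j
  simp only [finIco, mem_filter, mem_univ, true_and]
  refine ⟨fun hi => ?_, fun h => h ▸ hA j⟩
  have hne : ∀ i i' : Fin k, (i : ℕ) < i' → b i ≤ j → (j : ℕ) < b (i + 1) → ¬ b i' ≤ j :=
    fun i i' hii' _ hj hj' => (hj.trans_le (hb hii')).not_ge hj'
  rcases lt_trichotomy (A j) i with h | h | h
  · exact absurd hi.1 (hne _ _ h (hA j).1 (hA j).2)
  · exact h
  · exact absurd (hA j).1 (hne _ _ h hi.1 hi.2)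

lemma lt_card_filter_lt_iff {α : Type*} [LinearOrder α] {f : Fin m → α} (hf : Monotone f)
    (j : Fin m) (t : α) : (j : ℕ) < #{j' | f j' < t} ↔ f j < t := by
  constructor
  · intro hj
    by_contra! hjt
    have hsub : ({j' | f j' < t} : Finset (Fin m)) ⊆ Iio j := fun j' hj' => by
      simp only [mem_filter, mem_univ, true_and] at hj'
      exact mem_Iio.mpr (lt_of_not_ge fun h => (hjt.trans (hf h)).not_gt hj')
    have := card_le_card hsub
    rw [Fin.card_Iio] at this
    omega
  · intro hjt
    have hsub : Iic j ⊆ ({j' | f j' < t} : Finset (Fin m)) := fun j' hj' => by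
      simp only [mem_filter, mem_univ, true_and]
      exact (hf (mem_Iic.mp hj')).trans_lt hjt
    have := card_le_card hsub
    rw [Fin.card_Iic] at this
    omega

/-- The boundary `b i` is the number of points sent below `i`. -/
lemma exists_of_monotone_assignment {A : Fin m → Fin k} (hA : Monotone A) :
    ∃ b : IntervalPartition m k, IsIntervalAssignment b A := by
  let b (i : ℕ) : ℕ := #{j | (A j : ℕ) < i}
  have hb : Monotone b := fun x y hxy => card_le_card fun j hj => by
    simp only [mem_filter, mem_univ, true_and] at hj ⊢
    omega
  have hbk : b k = m := by simp [b]
  have hlt : ∀ (j : Fin m) (i : ℕ), (j : ℕ) < b i ↔ (A j : ℕ) < i :=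
    lt_card_filter_lt_iff (f := fun j => (A j : ℕ)) (fun _ _ h => hA h)
  refine ⟨⟨b, hb, by simp [b], hbk⟩, fun i => ?_⟩
  ext j
  simp only [finIco, mem_filter, mem_univ, true_and, not_lt.symm, hlt, Fin.ext_iff]
  omega

variable {v w : Fin m → ℝ}

lemma cost_intervalCost_eq {b : IntervalPartition m k} {A : Fin m → Fin k}
    (hA : IsIntervalAssignment b A) :
    cost (intervalCost v w) k b.1 = ∑ i, clusterCost v w {j | A j = i} := by
  rw [cost, ← Fin.sum_univ_eq_sum_range (fun i => intervalCost v w (b.1 i) (b.1 (i + 1)))]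
  exact sum_congr rfl fun i _ => by rw [intervalCost, hA i]

end IntervalPartition

open IntervalPartition

lemma wKMeans_eq_optCost {m : ℕ} {v w : Fin m → ℝ} (hw : ∀ j, 0 < w j) (hv : Monotone v)
    (k : ℕ) [NeZero k] : wKMeans v w k = optCost (intervalCost v w) m k := by
  refine le_antisymm (le_ciInf fun b => ?_) (le_wKMeans fun A z => ?_)
  · obtain ⟨A, hA⟩ := exists_assignment b
    exact (cost_intervalCost_eq hA).symm ▸ wKMeans_le_sum_clusterCost hw A
  · obtain ⟨A', hA', hnear⟩ := exists_monotone_nearest hv (Tuple.monotone_sort z)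
    obtain ⟨b, hb⟩ := exists_of_monotone_assignment hA'
    calc optCost (intervalCost v w) m k
        ≤ cost (intervalCost v w) k b.1 := optCost_le _ (intervalCost_nonneg hw) b
      _ = ∑ i, clusterCost v w {j | A' j = i} := cost_intervalCost_eq hb
      _ ≤ ∑ j, w j * (v j - (z ∘ Tuple.sort z) (A' j)) ^ 2 := sum_clusterCost_fiber_le hw A' _
      _ ≤ ∑ j, w j * (v j - z (A j)) ^ 2 := sum_le_sum fun j _ =>
          mul_le_mul_of_nonneg_left (by simpa using hnear j ((Tuple.sort z).symm (A j))) (hw j).le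

theorem wKMeans_convex {m : ℕ} {v w : Fin m → ℝ} (hw : ∀ j, 0 < w j) (k : ℕ) :
    2 * wKMeans v w (k + 2) ≤ wKMeans v w (k + 1) + wKMeans v w (k + 3) := by
  have hw' : ∀ j, 0 < (w ∘ Tuple.sort v) j := fun j => hw _
  simp only [← wKMeans_comp_equiv (Tuple.sort v) v w,
    wKMeans_eq_optCost hw' (Tuple.monotone_sort v)]
  exact optCost_convex _ (intervalCost_nonneg hw')
    (intervalCost_quadrangle hw' (Tuple.monotone_sort v)) m k

lemma add_mul_le_add_mul_of_sub_succ_le {f : ℕ → ℝ} {lam : ℝ} {C : ℕ}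
    (hconv : ∀ n, C ≤ n → f (n + 1) - f (n + 2) ≤ f n - f (n + 1))
    (h : f C - f (C + 1) ≤ lam) :
    ∀ n, C ≤ n → f C + lam * C ≤ f n + lam * n := by
  have hgap : ∀ n, C ≤ n → f n - f (n + 1) ≤ lam :=
    Nat.le_induction h fun n hn ih => (hconv n hn).trans ih
  refine Nat.le_induction le_rfl fun n hn ih => ?_
  push_cast
  linarith [hgap n hn]

theorem weighted_kmeans_early_stopping_general
    {m : ℕ} (v w : Fin m → ℝ) (hw : ∀ j, 0 < w j)
    (lam : ℝ) (C : ℕ) (hC : 1 ≤ C)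
    (h : wKMeans v w C - wKMeans v w (C + 1) ≤ lam) :
    ∀ C' : ℕ, C ≤ C' →
      wKMeans v w C + lam * (C : ℝ) ≤ wKMeans v w C' + lam * (C' : ℝ) := by
  refine add_mul_le_add_mul_of_sub_succ_le (fun n hn => ?_) h
  obtain ⟨k, rfl⟩ : ∃ k, n = k + 1 := ⟨n - 1, by omega⟩
  linarith [wKMeans_convex (v := v) hw k]

/-- **Early-stopping correctness.** If for some `C ≥ 1` the loss improvement from one
more cluster satisfies `W(C) − W(C+1) ≤ λ`, then for every `C' ≥ C` we have
`W(C) + λ·C ≤ W(C') + λ·C'`. -/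
theorem weighted_kmeans_early_stopping
    {m : ℕ} (hm : 1 ≤ m) (v w : Fin m → ℝ) (hw : ∀ j, 0 < w j)
    (lam : ℝ) (hlam : 0 ≤ lam) (C : ℕ) (hC : 1 ≤ C)
    (h : wKMeans v w C - wKMeans v w (C + 1) ≤ lam) :
    ∀ C' : ℕ, C ≤ C' →
      wKMeans v w C + lam * (C : ℝ) ≤ wKMeans v w C' + lam * (C' : ℝ) :=
  weighted_kmeans_early_stopping_general v w hw lam C hC h
end
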